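/- arXiv:1207.5286 — 3 statements merged into one kernel-verified Lean document; each statement's English description precedes it below -/
import Mathlib

section
/- Let λ > 0 and define Ψ₁ : ℝ → ℝ by Ψ₁(v) = e^{2λv} − (1 + 2λv + 2λ²v²) for v ≥ 0 and Ψ₁(v) = 0 for v ≤ 0. Then for every M₁ > 0 there exists a constant C > 0 (depending only on λ and M₁) such that for all v ∈ [−M₁, M₁]: 0 ≤ v·Ψ₁'(v) ≤ C·Ψ₁(v). -/
/-!
Writing `x = 2λv`, for `v > 0` one has `Ψ₁(v) = eˣ - 1 - x - x²/2` and `v Ψ₁'(v) = x (eˣ - 1 - x)`.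
Taylor's bounds `eˣ - 1 - x ≤ x² e^{|x|}` and `x³/6 ≤ eˣ - 1 - x - x²/2` give the claim with
`C = 6 e^{2λM₁}`; for `v ≤ 0` both sides vanish.
-/

open Real Set Filter Topology

lemma Real.abs_exp_sub_one_sub_id_le_sq_mul_exp (x : ℝ) : |exp x - 1 - x| ≤ x ^ 2 * exp |x| := by
  have h := Complex.norm_exp_sub_sum_le_norm_mul_exp x 2
  norm_num [Finset.sum_range_succ, ← Complex.ofReal_exp] at h
  norm_cast at h
  rwa [Real.norm_eq_abs, ← sub_sub] at h

lemma Real.pow_three_div_six_le_exp_sub {x : ℝ} (hx : 0 ≤ x) :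
    x ^ 3 / 6 ≤ exp x - 1 - x - x ^ 2 / 2 := by
  have h := sum_le_exp_of_nonneg hx 4
  norm_num [Finset.sum_range_succ, Nat.factorial] at h
  linarith

lemma Real.mul_exp_sub_one_sub_le {x X : ℝ} (hx : 0 ≤ x) (hxX : x ≤ X) :
    x * (exp x - 1 - x) ≤ 6 * exp X * (exp x - 1 - x - x ^ 2 / 2) := by
  have hsq : exp x - 1 - x ≤ x ^ 2 * exp X :=
    calc exp x - 1 - x ≤ |exp x - 1 - x| := le_abs_self _
      _ ≤ x ^ 2 * exp |x| := abs_exp_sub_one_sub_id_le_sq_mul_exp x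
      _ ≤ x ^ 2 * exp X := by rw [abs_of_nonneg hx]; gcongr
  calc x * (exp x - 1 - x) ≤ x * (x ^ 2 * exp X) := by gcongr
    _ = 6 * exp X * (x ^ 3 / 6) := by ring
    _ ≤ 6 * exp X * (exp x - 1 - x - x ^ 2 / 2) := by gcongr; exact pow_three_div_six_le_exp_sub hx

lemma Real.hasDerivAt_exp_sub_one_sub_sub_sq_div_two (x : ℝ) :
    HasDerivAt (fun x => exp x - 1 - x - x ^ 2 / 2) (exp x - 1 - x) x := by
  refine ((((hasDerivAt_exp x).sub_const 1).sub (hasDerivAt_id' x)).sub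
    ((hasDerivAt_pow 2 x).div_const 2)).congr_deriv ?_
  norm_num

lemma mul_deriv_eq_zero_of_eqOn_Iic {f : ℝ → ℝ} (hf : EqOn f 0 (Iic 0)) {v : ℝ} (hv : v ≤ 0) :
    v * deriv f v = 0 := by
  rcases hv.lt_or_eq with hv | rfl
  · have : f =ᶠ[𝓝 v] fun _ => 0 := eventually_of_mem (Iic_mem_nhds hv) hf
    simp [this.deriv_eq]
  · exact zero_mul _

lemma deriv_eq_of_eqOn_Ioi {f g : ℝ → ℝ} {v g' : ℝ} (hfg : EqOn f g (Ioi 0)) (hv : 0 < v)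
    (hg : HasDerivAt g g' v) : deriv f v = g' :=
  (hg.congr_of_eventuallyEq (eventually_of_mem (Ioi_mem_nhds hv) hfg)).deriv

theorem stmt_4_general (lam : ℝ) (hlam : 0 < lam) (Ψ : ℝ → ℝ)
    (hΨ : ∀ v : ℝ, Ψ v =
      if 0 ≤ v then Real.exp (2 * lam * v) - (1 + 2 * lam * v + 2 * lam ^ 2 * v ^ 2) else 0)
    (M₁ : ℝ) :
    ∃ C : ℝ, 0 < C ∧ ∀ v ∈ Set.Icc (-M₁) M₁,
      0 ≤ v * deriv Ψ v ∧ v * deriv Ψ v ≤ C * Ψ v := by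
  have hneg : EqOn Ψ 0 (Iic 0) := fun w hw => by
    rcases (mem_Iic.1 hw).lt_or_eq with hw | rfl
    · simp [hΨ, not_le.2 hw]
    · simp [hΨ]
  have hpos : EqOn Ψ ((fun x => exp x - 1 - x - x ^ 2 / 2) ∘ fun v => 2 * lam * v) (Ioi 0) :=
    fun w hw => by rw [hΨ, if_pos (le_of_lt (mem_Ioi.1 hw))]; simp only [Function.comp]; ring
  refine ⟨6 * exp (2 * lam * M₁), by positivity, fun v hv => ?_⟩
  rcases le_or_gt v 0 with hv0 | hv0
  · rw [mul_deriv_eq_zero_of_eqOn_Iic hneg hv0, hneg (mem_Iic.2 hv0)]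
    simp
  · have hderiv := deriv_eq_of_eqOn_Ioi hpos hv0
      ((hasDerivAt_exp_sub_one_sub_sub_sq_div_two _).comp v ((hasDerivAt_id' v).const_mul (2 * lam)))
    rw [hderiv, hpos hv0]
    have hx : 0 ≤ 2 * lam * v := by positivity
    have hbound := mul_exp_sub_one_sub_le hx (by gcongr; exact hv.2 : 2 * lam * v ≤ 2 * lam * M₁)
    have hE : 2 * lam * v ≤ exp (2 * lam * v) - 1 := by linarith [add_one_le_exp (2 * lam * v)]
    constructor
    · nlinarith
    · simp only [Function.comp]
      linarith

/-- For `Ψ₁(v) = e^{2λv} − (1 + 2λv + 2λ²v²)` (for `v ≥ 0`, extended by `0` for `v ≤ 0`)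
and any `M₁ > 0`, there is a constant `C > 0` with
`0 ≤ v·Ψ₁'(v) ≤ C·Ψ₁(v)` for all `v ∈ [−M₁, M₁]`. -/
theorem stmt_4 (lam : ℝ) (hlam : 0 < lam) (Ψ : ℝ → ℝ)
    (hΨ : ∀ v : ℝ, Ψ v =
      if 0 ≤ v then Real.exp (2 * lam * v) - (1 + 2 * lam * v + 2 * lam ^ 2 * v ^ 2) else 0)
    (M₁ : ℝ) (hM₁ : 0 < M₁) :
    ∃ C : ℝ, 0 < C ∧ ∀ v ∈ Set.Icc (-M₁) M₁,
      0 ≤ v * deriv Ψ v ∧ v * deriv Ψ v ≤ C * Ψ v :=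
  stmt_4_general lam hlam Ψ hΨ M₁
end

section
/- Let μ₀ > 0, Λ ≥ 0 and M > 0. Then there exist constants β > 0, B > 1 and δ > 0 such that the function w(u) = B − e^{−β(u+M)} satisfies, for every u ∈ [−M, M]: w(u) > 0, w'(u) > 0, w''(u) < 0, and (μ₀/2)·(w''(u)/w(u)) + 2Λ·(w'(u)/w(u)) + (w'(u)/w(u))² ≤ −δ. -/
/-!
With `a = e^{-β(u+M)}` one has `w' = β a` and `w'' = -β w'`, so for `r = w'/w` the quantity
to bound is `r (r + 2Λ - μ₀β/2)`. Choosing `μ₀β = 4Λ + 4` turns it into `r (r - 2) ≤ -r` as long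
as `0 ≤ r ≤ 1`, which `B = β + 2` guarantees since `a ≤ 1` on `[-M, M]`. Finally `a ≥ e^{-2βM}`
bounds `r` below by `δ = β e^{-2βM} / B`.
-/

open Real

lemma deriv_exp_neg_mul_add (β c : ℝ) :
    deriv (fun x => exp (-β * (x + c))) = fun x => -β * exp (-β * (x + c)) := by
  funext x
  have h : HasDerivAt (fun x => -β * (x + c)) (-β * 1) x :=
    ((hasDerivAt_id x).add_const c).const_mul (-β)
  rw [h.exp.deriv, mul_one, mul_comm]

lemma deriv_const_sub_exp_neg_mul_add (B β c : ℝ) :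
    deriv (fun x => B - exp (-β * (x + c))) = fun x => β * exp (-β * (x + c)) := by
  funext x
  rw [deriv_const_sub, deriv_exp_neg_mul_add]
  beta_reduce
  ring

lemma deriv_deriv_const_sub_exp_neg_mul_add (B β c : ℝ) :
    deriv (deriv fun x => B - exp (-β * (x + c))) =
      fun x => -β * (β * exp (-β * (x + c))) := by
  funext x
  rw [deriv_const_sub_exp_neg_mul_add, deriv_const_mul_field', deriv_exp_neg_mul_add]
  ring

lemma quadratic_le_neg_of_mul_eq {μ₀ Λ β r : ℝ} (hμβ : μ₀ * β = 4 * Λ + 4)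
    (hr₀ : 0 ≤ r) (hr₁ : r ≤ 1) :
    μ₀ / 2 * (-β * r) + 2 * Λ * r + r ^ 2 ≤ -r := by
  have h : μ₀ / 2 * (-β * r) + 2 * Λ * r + r ^ 2 = r * (r - 2) := by
    linear_combination (-r / 2) * hμβ
  rw [h]
  nlinarith

theorem stmt_10_general (μ₀ Λ M : ℝ) (hμ₀ : 0 < μ₀) (hΛ : 0 ≤ Λ) :
    ∃ β B δ : ℝ, 0 < β ∧ 1 < B ∧ 0 < δ ∧
      ∀ u ∈ Set.Icc (-M) M,
        let w : ℝ → ℝ := fun x => B - Real.exp (-β * (x + M))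
        0 < w u ∧ 0 < deriv w u ∧ deriv (deriv w) u < 0 ∧
        μ₀ / 2 * (deriv (deriv w) u / w u) + 2 * Λ * (deriv w u / w u) +
          (deriv w u / w u) ^ 2 ≤ -δ := by
  set β := (4 * Λ + 4) / μ₀
  have hβ : 0 < β := by positivity
  have hμβ : μ₀ * β = 4 * Λ + 4 := mul_div_cancel₀ _ hμ₀.ne'
  refine ⟨β, β + 2, β * exp (-(2 * β * M)) / (β + 2), hβ, by linarith, by positivity, ?_⟩
  rintro u ⟨hu₀, hu₁⟩ w
  simp only [w]
  rw [deriv_deriv_const_sub_exp_neg_mul_add, deriv_const_sub_exp_neg_mul_add]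
  beta_reduce
  set a := exp (-β * (u + M))
  have ha₀ : 0 < a := exp_pos _
  have ha₁ : a ≤ 1 := exp_le_one_iff.mpr (by nlinarith)
  have ha₂ : exp (-(2 * β * M)) ≤ a := exp_le_exp.mpr (by nlinarith)
  have hw : β + 1 ≤ β + 2 - a := by linarith
  have hr₀ : 0 < β * a / (β + 2 - a) := div_pos (mul_pos hβ ha₀) (by linarith)
  have hr₁ : β * a / (β + 2 - a) ≤ 1 := by
    rw [div_le_one (by linarith)]
    nlinarith
  have hδ : β * exp (-(2 * β * M)) / (β + 2) ≤ β * a / (β + 2 - a) :=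
    div_le_div₀ (by positivity) (by gcongr) (by linarith) (by linarith)
  refine ⟨by linarith, mul_pos hβ ha₀, by linarith [mul_pos hβ (mul_pos hβ ha₀)], ?_⟩
  rw [mul_div_assoc]
  linarith [quadratic_le_neg_of_mul_eq hμβ hr₀.le hr₁]

/-- Choice of parameters in the uniqueness proof: given `μ₀ > 0`, `Λ ≥ 0`, `M > 0`, there
exist `β > 0`, `B > 1` and `δ > 0` so that `w(u) = B − e^{−β(u+M)}` satisfies, on `[−M, M]`,
`w > 0`, `w' > 0`, `w'' < 0` and `(μ₀/2)(w''/w) + 2Λ(w'/w) + (w'/w)² ≤ −δ`. -/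
theorem stmt_10 (μ₀ Λ M : ℝ) (hμ₀ : 0 < μ₀) (hΛ : 0 ≤ Λ) (hM : 0 < M) :
    ∃ β B δ : ℝ, 0 < β ∧ 1 < B ∧ 0 < δ ∧
      ∀ u ∈ Set.Icc (-M) M,
        let w : ℝ → ℝ := fun x => B - Real.exp (-β * (x + M))
        0 < w u ∧ 0 < deriv w u ∧ deriv (deriv w) u < 0 ∧
        μ₀ / 2 * (deriv (deriv w) u / w u) + 2 * Λ * (deriv w u / w u) +
          (deriv w u / w u) ^ 2 ≤ -δ :=
  stmt_10_general μ₀ Λ M hμ₀ hΛ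
end

section
/- Let n ∈ ℕ, μ₀ > 0, and let A be a real symmetric n×n matrix with ⟨Az, z⟩ ≥ μ₀|z|² for all z ∈ ℝⁿ. Let a > 0, ε ≥ 0, Λ ≥ 0, k ≥ 0, l ≥ 0 and l_ε ∈ ℝ be constants, and let w, w', w'' be real numbers with w > 0, w' > 0 and w'' ≤ 0. Suppose z ∈ ℝⁿ, f₀ ∈ ℝ, f_u ∈ ℝ and f_z ∈ ℝⁿ satisfy |f₀| ≤ l + Λ|z|², |f_z| ≤ k + Λ|z| and f_u ≤ l_ε + ε|z|². Then (w''/(2w))·⟨Az, z⟩ + (w'/w)·(⟨z, f_z⟩ − f₀) + f_u + a·|f_z + (w'/w)z|² ≤ |z|²·[ (μ₀/2)(w''/w) + 2Λ(w'/w) + (w'/w)² + ε + 2a(Λ + w'/w)² ] + l·(w'/w) + l_ε + (1+2a)·k². -/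
/-!
After the substitution `c = w'/w`, the claim is a sum of three elementary bounds. The
second-order term is controlled by ellipticity because `w'' ≤ 0`. Cauchy–Schwarz and
`|f_z| ≤ k + Λ|z|` give `c⟨z, f_z⟩ ≤ ck|z| + cΛ|z|²`, and AM–GM absorbs `ck|z|`. The triangle
inequality gives `|f_z + cz| ≤ k + (Λ + c)|z|`, and squaring uses `(s + t)² ≤ 2s² + 2t²`.
-/

open Matrix WithLp
open scoped RealInnerProductSpace

section InnerProductSpace

variable {E : Type*} [NormedAddCommGroup E] [InnerProductSpace ℝ E]

lemma smul_inner_le_of_norm_le {x y : E} {c k Λ : ℝ} (hc : 0 ≤ c) (hx : ‖x‖ ≤ k + Λ * ‖y‖) :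
    c * ⟪y, x⟫ ≤ k ^ 2 + (Λ * c + c ^ 2 / 4) * ‖y‖ ^ 2 := by
  have hCS : c * ⟪y, x⟫ ≤ c * ‖y‖ * (k + Λ * ‖y‖) := by
    rw [mul_assoc]
    gcongr
    exact (real_inner_le_norm y x).trans (by gcongr)
  have hAMGM : c * ‖y‖ * k ≤ k ^ 2 + c ^ 2 / 4 * ‖y‖ ^ 2 := by
    nlinarith [sq_nonneg (k - c * ‖y‖ / 2)]
  linarith

lemma norm_add_smul_sq_le_of_norm_le {x y : E} {c k Λ : ℝ} (hc : 0 ≤ c)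
    (hx : ‖x‖ ≤ k + Λ * ‖y‖) :
    ‖x + c • y‖ ^ 2 ≤ 2 * k ^ 2 + 2 * (Λ + c) ^ 2 * ‖y‖ ^ 2 := by
  have htri : ‖x + c • y‖ ≤ k + (Λ + c) * ‖y‖ :=
    calc ‖x + c • y‖ ≤ ‖x‖ + c * ‖y‖ := by
          simpa [norm_smul, abs_of_nonneg hc] using norm_add_le x (c • y)
      _ ≤ k + (Λ + c) * ‖y‖ := by linarith
  calc ‖x + c • y‖ ^ 2 ≤ (k + (Λ + c) * ‖y‖) ^ 2 := by gcongr
    _ ≤ 2 * (k ^ 2 + ((Λ + c) * ‖y‖) ^ 2) := add_sq_le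
    _ = 2 * k ^ 2 + 2 * (Λ + c) ^ 2 * ‖y‖ ^ 2 := by ring

end InnerProductSpace

section DotProduct

variable {ι : Type*} [Fintype ι]

lemma dotProduct_eq_inner_toLp (x y : ι → ℝ) :
    x ⬝ᵥ y = ⟪toLp 2 x, toLp 2 y⟫ := by
  simp [EuclideanSpace.inner_toLp_toLp, dotProduct_comm]

lemma dotProduct_self_eq_norm_toLp_sq (x : ι → ℝ) : x ⬝ᵥ x = ‖toLp 2 x‖ ^ 2 := by
  rw [dotProduct_eq_inner_toLp, real_inner_self_eq_norm_sq]

lemma sqrt_dotProduct_self_eq_norm_toLp (x : ι → ℝ) : √(x ⬝ᵥ x) = ‖toLp 2 x‖ := by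
  rw [dotProduct_self_eq_norm_toLp_sq, Real.sqrt_sq (norm_nonneg _)]

end DotProduct

theorem stmt_12_general (n : ℕ) (μ₀ : ℝ)
    (A : Matrix (Fin n) (Fin n) ℝ)
    (hA : ∀ z : Fin n → ℝ, μ₀ * (z ⬝ᵥ z) ≤ z ⬝ᵥ A.mulVec z)
    (a ε Λ k l lε : ℝ) (ha : 0 < a)
    (w w' w'' : ℝ) (hw : 0 < w) (hw' : 0 < w') (hw'' : w'' ≤ 0)
    (z fz : Fin n → ℝ) (f₀ fu : ℝ)
    (hf₀ : |f₀| ≤ l + Λ * (z ⬝ᵥ z))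
    (hfz : Real.sqrt (fz ⬝ᵥ fz) ≤ k + Λ * Real.sqrt (z ⬝ᵥ z))
    (hfu : fu ≤ lε + ε * (z ⬝ᵥ z)) :
    w'' / (2 * w) * (z ⬝ᵥ A.mulVec z) + w' / w * ((z ⬝ᵥ fz) - f₀) + fu +
        a * ((fz + (w' / w) • z) ⬝ᵥ (fz + (w' / w) • z)) ≤
      (z ⬝ᵥ z) *
          (μ₀ / 2 * (w'' / w) + 2 * Λ * (w' / w) + (w' / w) ^ 2 + ε +
            2 * a * (Λ + w' / w) ^ 2) +
        l * (w' / w) + lε + (1 + 2 * a) * k ^ 2 := by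
  set c := w' / w
  have hc : 0 ≤ c := (div_pos hw' hw).le
  have hsecond : w'' / (2 * w) * (z ⬝ᵥ A.mulVec z) ≤ (z ⬝ᵥ z) * (μ₀ / 2 * (w'' / w)) := by
    have hcoef : w'' / (2 * w) ≤ 0 := div_nonpos_of_nonpos_of_nonneg hw'' (by positivity)
    calc w'' / (2 * w) * (z ⬝ᵥ A.mulVec z) ≤ w'' / (2 * w) * (μ₀ * (z ⬝ᵥ z)) :=
          mul_le_mul_of_nonpos_left (hA z) hcoef
      _ = (z ⬝ᵥ z) * (μ₀ / 2 * (w'' / w)) := by field_simp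
  have hf₀' : c * -f₀ ≤ c * (l + Λ * (z ⬝ᵥ z)) :=
    mul_le_mul_of_nonneg_left ((neg_le_abs f₀).trans hf₀) hc
  rw [sqrt_dotProduct_self_eq_norm_toLp, sqrt_dotProduct_self_eq_norm_toLp] at hfz
  have hcross := smul_inner_le_of_norm_le hc hfz
  have hquad := mul_le_mul_of_nonneg_left (norm_add_smul_sq_le_of_norm_le hc hfz) ha.le
  rw [← dotProduct_eq_inner_toLp, ← dotProduct_self_eq_norm_toLp_sq] at hcross
  rw [← toLp_smul, ← toLp_add, ← dotProduct_self_eq_norm_toLp_sq,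
    ← dotProduct_self_eq_norm_toLp_sq] at hquad
  have hzz : 0 ≤ c ^ 2 * (z ⬝ᵥ z) := by
    rw [dotProduct_self_eq_norm_toLp_sq]
    positivity
  linarith

/-- The key pointwise estimate for the transformed generator in the uniqueness proof:
if `⟨Az,z⟩ ≥ μ₀|z|²`, `|f₀| ≤ l + Λ|z|²`, `|f_z| ≤ k + Λ|z|`, `f_u ≤ l_ε + ε|z|²`,
and `w > 0`, `w' > 0`, `w'' ≤ 0`, then
`(w''/(2w))⟨Az,z⟩ + (w'/w)(⟨z,f_z⟩ − f₀) + f_u + a|f_z + (w'/w)z|²` is bounded by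
`|z|²[(μ₀/2)(w''/w) + 2Λ(w'/w) + (w'/w)² + ε + 2a(Λ + w'/w)²] + l(w'/w) + l_ε + (1+2a)k²`. -/
theorem stmt_12 (n : ℕ) (μ₀ : ℝ) (hμ₀ : 0 < μ₀)
    (A : Matrix (Fin n) (Fin n) ℝ) (hAsymm : A.IsSymm)
    (hA : ∀ z : Fin n → ℝ, μ₀ * (z ⬝ᵥ z) ≤ z ⬝ᵥ A.mulVec z)
    (a ε Λ k l lε : ℝ) (ha : 0 < a) (hε : 0 ≤ ε) (hΛ : 0 ≤ Λ) (hk : 0 ≤ k) (hl : 0 ≤ l)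
    (w w' w'' : ℝ) (hw : 0 < w) (hw' : 0 < w') (hw'' : w'' ≤ 0)
    (z fz : Fin n → ℝ) (f₀ fu : ℝ)
    (hf₀ : |f₀| ≤ l + Λ * (z ⬝ᵥ z))
    (hfz : Real.sqrt (fz ⬝ᵥ fz) ≤ k + Λ * Real.sqrt (z ⬝ᵥ z))
    (hfu : fu ≤ lε + ε * (z ⬝ᵥ z)) :
    w'' / (2 * w) * (z ⬝ᵥ A.mulVec z) + w' / w * ((z ⬝ᵥ fz) - f₀) + fu +
        a * ((fz + (w' / w) • z) ⬝ᵥ (fz + (w' / w) • z)) ≤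
      (z ⬝ᵥ z) *
          (μ₀ / 2 * (w'' / w) + 2 * Λ * (w' / w) + (w' / w) ^ 2 + ε +
            2 * a * (Λ + w' / w) ^ 2) +
        l * (w' / w) + lε + (1 + 2 * a) * k ^ 2 :=
  stmt_12_general n μ₀ A hA a ε Λ k l lε ha w w' w'' hw hw' hw'' z fz f₀ fu hf₀ hfz hfu
end
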